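/- Let M ∈ K^{σ×σ}, E ∈ K^{m×σ}, s ∈ ℕ^m, δ ≥ deg of the minimal polynomial of M. Let (i_1,…,i_r) be the row rank profile of the priority-permuted Krylov matrix K_{δ,s}(E,M), and write i_k = φ(c_k,d_k). Then for every c: (a) for all 0 ≤ d < δ_c, φ(c,d) ∈ {i_1,…,i_r}; (b) δ_c = 0 iff c ∉ {c_1,…,c_r}; (c) if δ_c > 0 then δ_c = 1 + max{d_k : c_k = c}. -/

import Mathlib

open Polynomial Matrix

/-- Priority comparison on pairs `(c,d)`: lexicographic on `(s_c + d, c)`. -/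
def keyLt {m : ℕ} (s : Fin m → ℕ) (x y : Fin m × ℕ) : Prop :=
  s x.1 + x.2 < s y.1 + y.2 ∨ (s x.1 + x.2 = s y.1 + y.2 ∧ x.1 < y.1)

/-- Row `(c,d)` of the priority-permuted Krylov matrix is a linear combination of the
earlier rows. -/
def DepEarlier {K : Type*} [Field K] {m σ : ℕ} (E : Matrix (Fin m) (Fin σ) K)
    (M : Matrix (Fin σ) (Fin σ) K) (s : Fin m → ℕ) (δ : ℕ) (c : Fin m) (d : ℕ) : Prop :=
  Matrix.vecMul (E c) (M ^ d) ∈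
    Submodule.span K
      ((fun y : Fin m × ℕ => Matrix.vecMul (E y.1) (M ^ y.2)) ''
        {y | y.2 ≤ δ ∧ keyLt s y (c, d)})

/-- `dm` is the `s`-minimal degree of `(E,M)`. -/
def IsMinDeg {K : Type*} [Field K] {m σ : ℕ} (E : Matrix (Fin m) (Fin σ) K)
    (M : Matrix (Fin σ) (Fin σ) K) (s : Fin m → ℕ) (δ : ℕ) (dm : Fin m → ℕ) : Prop :=
  ∀ c, DepEarlier E M s δ c (dm c) ∧ ∀ d, d < dm c → ¬ DepEarlier E M s δ c d

/-- The priority-permuted Krylov matrix `K_{δ,s}(E,M)`, with rows indexed by the pairs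
`(c,d)` (the ordering of the rows being given by `keyLt`). -/
def krylovMat {K : Type*} [Field K] {m σ : ℕ} (E : Matrix (Fin m) (Fin σ) K)
    (M : Matrix (Fin σ) (Fin σ) K) (δ : ℕ) :
    Matrix (Fin m × Fin (δ + 1)) (Fin σ) K :=
  Matrix.of fun x j => Matrix.vecMul (E x.1) (M ^ (x.2 : ℕ)) j

/-- `I` is the row rank profile of `A` (rows ordered by the priority order `keyLt`):
the rows indexed by `I` are linearly independent, `I` has cardinality the rank of `A`,
and `I` is lexicographically smallest with these properties: for any other such `J`,
the first position where `I` and `J` disagree belongs to `I`. -/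
def IsRowRankProfile {K : Type*} [Field K] {m σ δ : ℕ} (s : Fin m → ℕ)
    (A : Matrix (Fin m × Fin (δ + 1)) (Fin σ) K)
    (I : Finset (Fin m × Fin (δ + 1))) : Prop :=
  LinearIndependent K (fun x : I => A x.1) ∧ I.card = A.rank ∧
    ∀ J : Finset (Fin m × Fin (δ + 1)),
      LinearIndependent K (fun x : J => A x.1) → J.card = A.rank → J ≠ I →
        ∃ x ∈ I, x ∉ J ∧ ∀ y : Fin m × Fin (δ + 1),
          keyLt s (y.1, (y.2 : ℕ)) (x.1, (x.2 : ℕ)) → (y ∈ I ↔ y ∈ J)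

/-!
Order the rows by an injective key. The row rank profile is then the greedy set of rows that
are not in the span of the rows of smaller key: the greedy set is independent of full size, and
at the first row where the profile would differ from it, that row would lie in the span of the
earlier rows, which are the same in both sets, contradicting independence of the profile.

For the priority-permuted Krylov matrix, row `(c, d)` is a combination of earlier rows exactly
when `δ_c ≤ d`. Multiplying a relation by `M` raises every key by one; the rows it pushes past
degree `δ` are brought back by the minimal polynomial of `M`, whose degree is at most `δ`.
So the profile is `{(c, d) | d < δ_c}`, and (a)–(c) are read off from this description.
-/

open Submodule Set Module Function

section GreedyIndices

variable (K : Type*) {V ι α : Type*} [Field K] [AddCommGroup V] [Module K V] [LinearOrder α]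

def greedyIndices (κ : ι → α) (v : ι → V) : Set ι :=
  {x | v x ∉ span K (v '' {y | κ y < κ x})}

variable {K} (κ : ι → α) (v : ι → V)

theorem mem_span_image_greedyIndices_inter [WellFoundedLT α] (x : ι) :
    v x ∈ span K (v '' (greedyIndices K κ v ∩ {y | κ y ≤ κ x})) := by
  induction x using (InvImage.wf κ wellFounded_lt).induction with
  | _ x ih =>
  by_cases hx : x ∈ greedyIndices K κ v
  · exact subset_span ⟨x, ⟨hx, le_rfl⟩, rfl⟩
  · refine span_le.2 ?_ (not_not.1 hx)
    rintro _ ⟨y, hy, rfl⟩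
    exact span_mono (image_mono (inter_subset_inter_right _ fun z (hz : κ z ≤ κ y) =>
      (hz.trans hy.le : κ z ≤ κ x))) (ih y hy)

theorem span_image_lt_eq_span_image_greedyIndices_inter [WellFoundedLT α] (x : ι) :
    span K (v '' {y | κ y < κ x}) = span K (v '' (greedyIndices K κ v ∩ {y | κ y < κ x})) := by
  refine le_antisymm (span_le.2 ?_) (span_mono (image_mono inter_subset_right))
  rintro _ ⟨y, hy, rfl⟩
  exact span_mono (image_mono (inter_subset_inter_right _ fun z (hz : κ z ≤ κ y) =>
      (hz.trans_lt hy : κ z < κ x))) (mem_span_image_greedyIndices_inter κ v y)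

theorem span_image_greedyIndices [WellFoundedLT α] :
    span K (v '' greedyIndices K κ v) = span K (range v) := by
  refine le_antisymm (span_mono (image_subset_range _ _)) (span_le.2 ?_)
  rintro _ ⟨x, rfl⟩
  exact span_mono (image_mono inter_subset_left) (mem_span_image_greedyIndices_inter κ v x)

theorem linearIndepOn_greedyIndices (hκ : Injective κ) :
    LinearIndepOn K v (greedyIndices K κ v) := by
  classical
  refine linearIndepOn_of_finite _ fun t ht htfin => ?_
  lift t to Finset ι using htfin
  induction t using Finset.induction_on_max_value κ with
  | empty => simp
  | insert a t hat hmax ih =>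
    rw [Finset.coe_insert] at ht ⊢
    refine (linearIndepOn_insert hat).2 ⟨ih ((subset_insert _ _).trans ht), fun hspan =>
      ht (mem_insert _ _) (span_mono (image_mono fun y hy => ?_) hspan)⟩
    exact (hmax y hy).lt_of_ne (hκ.ne (ne_of_mem_of_not_mem hy hat))

theorem coe_eq_greedyIndices_of_lexMin [Finite ι] [WellFoundedLT α] (hκ : Injective κ)
    (I : Finset ι) (hI : LinearIndepOn K v I)
    (hmin : ∀ J : Finset ι, LinearIndepOn K v J → J.card = finrank K (span K (range v)) →
      J ≠ I → ∃ x ∈ I, x ∉ J ∧ ∀ y, κ y < κ x → (y ∈ I ↔ y ∈ J)) :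
    (I : Set ι) = greedyIndices K κ v := by
  set P := (toFinite (greedyIndices K κ v)).toFinset
  have hP : (P : Set ι) = greedyIndices K κ v := Finite.coe_toFinset _
  by_contra hne
  have hPli : LinearIndepOn K v P := hP ▸ linearIndepOn_greedyIndices κ v hκ
  have hPcard : P.card = finrank K (span K (range v)) := by
    rw [← span_image_greedyIndices κ v, ← hP, image_eq_range, finrank_span_eq_card hPli]
    simp
  obtain ⟨x, hxI, hxP, hagree⟩ := hmin P hPli hPcard fun h => hne (h ▸ hP)
  have hx : v x ∈ span K (v '' {y | κ y < κ x}) :=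
    not_not.1 fun h => hxP (by rw [← Finset.mem_coe, hP]; exact h)
  rw [span_image_lt_eq_span_image_greedyIndices_inter, ← hP,
    show (P : Set ι) ∩ {y | κ y < κ x} = (I : Set ι) ∩ {y | κ y < κ x} from
      ext fun y => and_congr_left fun hy => (hagree y hy).symm] at hx
  exact (hI.mono (Set.insert_subset hxI Set.inter_subset_left)).notMem_span_of_insert
    (fun h => lt_irrefl (κ x) h.2) hx

end GreedyIndices

theorem pow_mem_span_pow_lt_natDegree_minpoly {K A : Type*} [Field K] [Ring A] [Algebra K A]
    {x : A} (hx : IsIntegral K x) (d : ℕ) :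
    x ^ d ∈ span K ((x ^ ·) '' Iio (minpoly K x).natDegree) := by
  classical
  have hrem : X ^ d %ₘ minpoly K x ∈ degreeLT K (minpoly K x).natDegree := by
    rw [mem_degreeLT, ← degree_eq_natDegree (minpoly.ne_zero hx)]
    exact degree_modByMonic_lt _ (minpoly.monic hx)
  rw [degreeLT_eq_span_X_pow] at hrem
  have := mem_map_of_mem (f := (aeval x).toLinearMap) hrem
  rw [map_span] at this
  simpa [minpoly.aeval_modByMonic_minpoly, Finset.coe_image, image_image] using this

section Krylov

variable {K : Type*} [Field K] {m σ : ℕ}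

theorem vecMul_pow_mem_span_vecMul_pow_lt (M : Matrix (Fin σ) (Fin σ) K) (w : Fin σ → K)
    (d : ℕ) : w ᵥ* M ^ d ∈ span K ((fun e => w ᵥ* M ^ e) '' Iio (minpoly K M).natDegree) := by
  have := mem_map_of_mem (f := vecMulBilin K K w)
    (pow_mem_span_pow_lt_natDegree_minpoly (IsIntegral.of_finite K M) d)
  rwa [map_span, ← image_comp] at this

def priorityKey (s : Fin m → ℕ) (x : Fin m × ℕ) : ℕ ×ₗ Fin m := toLex (s x.1 + x.2, x.1)

theorem keyLt_iff_priorityKey_lt (s : Fin m → ℕ) (x y : Fin m × ℕ) :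
    keyLt s x y ↔ priorityKey s x < priorityKey s y := by
  rw [keyLt, priorityKey, priorityKey, Prod.Lex.toLex_lt_toLex]

theorem priorityKey_injective (s : Fin m → ℕ) : Injective (priorityKey s) := by
  rintro ⟨c, d⟩ ⟨c', d'⟩ h
  simp only [priorityKey, toLex_inj, Prod.mk.injEq] at h
  obtain ⟨h1, rfl⟩ := h
  simp only [Prod.mk.injEq, true_and]
  omega

theorem IsRowRankProfile.coe_eq_greedyIndices {δ : ℕ} {s : Fin m → ℕ}
    {A : Matrix (Fin m × Fin (δ + 1)) (Fin σ) K} {I : Finset (Fin m × Fin (δ + 1))}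
    (hI : IsRowRankProfile s A I) :
    (I : Set (Fin m × Fin (δ + 1))) =
      greedyIndices K (fun x => priorityKey s (x.1, (x.2 : ℕ))) A := by
  refine coe_eq_greedyIndices_of_lexMin _ A ?_ I hI.1 ?_
  · intro x y h
    obtain ⟨h1, h2⟩ := Prod.mk.inj (priorityKey_injective s h)
    exact Prod.ext h1 (Fin.ext h2)
  · intro J hJ hcard hne
    simpa only [← keyLt_iff_priorityKey_lt] using
      hI.2.2 J hJ (hcard.trans (rank_eq_finrank_span_row A).symm) hne

variable (E : Matrix (Fin m) (Fin σ) K) (M : Matrix (Fin σ) (Fin σ) K) (s : Fin m → ℕ) {δ : ℕ}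

theorem vecMul_pow_mem_span_of_keyLt (hδ : (minpoly K M).natDegree ≤ δ) {c c' : Fin m}
    {d e : ℕ} (h : keyLt s (c', e) (c, d)) :
    E c' ᵥ* M ^ e ∈ span K ((fun y : Fin m × ℕ => E y.1 ᵥ* M ^ y.2) ''
      {y | y.2 ≤ δ ∧ keyLt s y (c, d)}) := by
  by_cases he : e ≤ δ
  · exact subset_span ⟨(c', e), ⟨he, h⟩, rfl⟩
  refine span_le.2 ?_ (vecMul_pow_mem_span_vecMul_pow_lt M (E c') e)
  rintro _ ⟨i, hi, rfl⟩
  have hi : i < (minpoly K M).natDegree := hi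
  refine subset_span ⟨(c', i), ⟨by omega, ?_⟩, rfl⟩
  rcases h with h | ⟨h, -⟩ <;> exact Or.inl (by dsimp only at h ⊢; omega)

theorem depEarlier_succ (hδ : (minpoly K M).natDegree ≤ δ) {c : Fin m} {d : ℕ}
    (h : DepEarlier E M s δ c d) : DepEarlier E M s δ c (d + 1) := by
  have h' := mem_map_of_mem (f := M.vecMulLinear) h
  rw [map_span, ← image_comp] at h'
  simp only [vecMulLinear_apply, vecMul_vecMul, ← pow_succ] at h'
  refine span_le.2 ?_ h'
  rintro _ ⟨⟨c', d'⟩, ⟨-, hlt⟩, rfl⟩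
  simp only [Function.comp_apply, vecMulLinear_apply, vecMul_vecMul, ← pow_succ]
  refine vecMul_pow_mem_span_of_keyLt E M s hδ ?_
  rcases hlt with hlt | ⟨heq, hc⟩
  · exact Or.inl (by dsimp only at hlt ⊢; omega)
  · exact Or.inr ⟨by dsimp only at heq ⊢; omega, hc⟩

theorem depEarlier_of_natDegree_minpoly_le (hδ : (minpoly K M).natDegree ≤ δ) {c : Fin m}
    {d : ℕ} (hd : (minpoly K M).natDegree ≤ d) : DepEarlier E M s δ c d := by
  refine span_le.2 ?_ (vecMul_pow_mem_span_vecMul_pow_lt M (E c) d)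
  rintro _ ⟨i, hi, rfl⟩
  have hi : i < (minpoly K M).natDegree := hi
  exact subset_span ⟨(c, i), ⟨by omega, Or.inl (by dsimp only; omega)⟩, rfl⟩

theorem depEarlier_iff_mem_span_image_keyLt (x : Fin m × Fin (δ + 1)) :
    DepEarlier E M s δ x.1 x.2 ↔ krylovMat E M δ x ∈
      span K (krylovMat E M δ '' {y | keyLt s (y.1, (y.2 : ℕ)) (x.1, (x.2 : ℕ))}) := by
  have hrows : (fun y : Fin m × ℕ => E y.1 ᵥ* M ^ y.2) '' {y | y.2 ≤ δ ∧ keyLt s y (x.1, x.2)}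
      = krylovMat E M δ '' {y | keyLt s (y.1, (y.2 : ℕ)) (x.1, (x.2 : ℕ))} := by
    ext w
    constructor
    · rintro ⟨⟨c, d⟩, ⟨hd, hlt⟩, rfl⟩
      exact ⟨(c, ⟨d, Nat.lt_succ_of_le hd⟩), hlt, rfl⟩
    · rintro ⟨y, hy, rfl⟩
      exact ⟨(y.1, y.2), ⟨Nat.lt_succ_iff.1 y.2.isLt, hy⟩, rfl⟩
  rw [DepEarlier, hrows]
  rfl

variable {E M s}

theorem IsMinDeg.depEarlier_iff {dm : Fin m → ℕ} (hdm : IsMinDeg E M s δ dm)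
    (hδ : (minpoly K M).natDegree ≤ δ) {c : Fin m} {d : ℕ} :
    DepEarlier E M s δ c d ↔ dm c ≤ d :=
  ⟨fun h => not_lt.1 fun hlt => (hdm c).2 d hlt h,
    fun hd => Nat.le_induction (hdm c).1 (fun _ _ => depEarlier_succ E M s hδ) d hd⟩

theorem IsMinDeg.le_natDegree_minpoly {dm : Fin m → ℕ} (hdm : IsMinDeg E M s δ dm)
    (hδ : (minpoly K M).natDegree ≤ δ) (c : Fin m) : dm c ≤ (minpoly K M).natDegree :=
  hdm.depEarlier_iff hδ |>.1 (depEarlier_of_natDegree_minpoly_le E M s hδ le_rfl)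

theorem IsRowRankProfile.mem_iff_lt_minDeg {dm : Fin m → ℕ} (hdm : IsMinDeg E M s δ dm)
    (hδ : (minpoly K M).natDegree ≤ δ) {I : Finset (Fin m × Fin (δ + 1))}
    (hI : IsRowRankProfile s (krylovMat E M δ) I) (x : Fin m × Fin (δ + 1)) :
    x ∈ I ↔ (x.2 : ℕ) < dm x.1 := by
  rw [← Finset.mem_coe, hI.coe_eq_greedyIndices, ← not_le, ← hdm.depEarlier_iff hδ,
    depEarlier_iff_mem_span_image_keyLt]
  simp only [greedyIndices, mem_ofPred_eq, keyLt_iff_priorityKey_lt]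

end Krylov

open scoped Classical in
/-- relations between the row rank profile of the priority-permuted
Krylov matrix and the `s`-minimal degree `(δ_1,…,δ_m)`:
(a) all rows `(c,d)` with `d < δ_c` belong to the profile;
(b) `δ_c = 0` iff no element of the profile has first component `c`;
(c) if `δ_c > 0` then `δ_c = 1 + max{d : (c,d) in the profile}`. -/
theorem rowRankProfile_minimal_degree
    {K : Type*} [Field K] {m σ δ : ℕ}
    (M : Matrix (Fin σ) (Fin σ) K) (E : Matrix (Fin m) (Fin σ) K) (s : Fin m → ℕ)
    (hδ : (minpoly K M).natDegree ≤ δ)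
    (dm : Fin m → ℕ) (hdm : IsMinDeg E M s δ dm)
    (I : Finset (Fin m × Fin (δ + 1)))
    (hI : IsRowRankProfile s (krylovMat E M δ) I) :
    ∀ c : Fin m,
      (∀ d : Fin (δ + 1), (d : ℕ) < dm c → (c, d) ∈ I) ∧
      (dm c = 0 ↔ ∀ x ∈ I, x.1 ≠ c) ∧
      (0 < dm c →
        dm c = 1 + (I.filter fun x => x.1 = c).sup fun x => (x.2 : ℕ)) := by
  intro c
  have hmem := hI.mem_iff_lt_minDeg hdm hδ
  have hle : dm c ≤ δ := (hdm.le_natDegree_minpoly hδ c).trans hδ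
  refine ⟨fun d hd => (hmem (c, d)).2 hd, ⟨fun h0 x hx hxc => ?_, fun hno => ?_⟩, fun hpos => ?_⟩
  · have := (hmem x).1 hx
    rw [hxc] at this
    omega
  · by_contra h0
    exact hno (c, 0) ((hmem (c, 0)).2 (by simp only [Fin.val_zero]; omega)) rfl
  · have hsup : ((I.filter fun x => x.1 = c).sup fun x => (x.2 : ℕ)) = dm c - 1 := by
      refine le_antisymm (Finset.sup_le fun x hx => ?_) ?_
      · obtain ⟨hxI, rfl⟩ := Finset.mem_filter.1 hx
        have := (hmem x).1 hxI
        omega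
      · have hlast : (c, (⟨dm c - 1, by omega⟩ : Fin (δ + 1))) ∈ I.filter fun x => x.1 = c :=
          Finset.mem_filter.2 ⟨(hmem _).2 (by dsimp only; omega), rfl⟩
        exact Finset.le_sup (f := fun x => (x.2 : ℕ)) hlast
    omega
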